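/- For every w ∈ ℍ one has e^{C(w)} ≠ e^{C(w̄)} (so χ_L(w) and η_L(w) are well defined); moreover the complex numbers χ_L(w) and η_L(w) are real, and, setting χ = χ_L(w) and η = η_L(w), one has f′_{(χ,η)}(w) = 0. -/

import Mathlib

/-!
`-Im C(w)` is `∫ halfPlaneKernel w dμ`, a positive number; since `μ ≤ λ` restricted to `[a, b]`,
it is at most the integral of the kernel over `[a, b]`, an arctangent difference below `π`. Hence
`Im C(w) ∈ (-π, 0)`, so `e^{C(w)}` is not real. As `C(w̄)` is the conjugate of `C(w)`, the
formulas for `χ_L(w)` and `η_L(w)` are invariant under conjugation, and clearing denominators gives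
`w - χ - η + 1 = (w - χ) e^{C(w)}`. Since `w - χ ∈ ℍ` and `arg e^{C(w)} = Im C(w) ∈ (-π, 0]`, the
principal logarithm is additive on this product, so `Log (w - χ - η + 1) = Log (w - χ) + C(w)`.
-/

open MeasureTheory Complex Filter Set

noncomputable section

/-- The support of a measure on `ℝ`. -/
def msupport (μ : Measure ℝ) : Set ℝ := {x | ∀ U ∈ nhds x, μ U ≠ 0}

/-- The Cauchy transform `C(w) = ∫ (w - x)⁻¹ dμ(x)`. -/
def cauchy (μ : Measure ℝ) (w : ℂ) : ℂ := ∫ x, (w - (x : ℂ))⁻¹ ∂μ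

/-- `f′_{(χ,η)}(w) = C(w) + Log (w - χ) - Log (w - χ - η + 1)`. -/
def fprime (μ : Measure ℝ) (χ η : ℝ) (w : ℂ) : ℂ :=
  cauchy μ w + Complex.log (w - (χ : ℂ)) - Complex.log (w - (χ : ℂ) - (η : ℂ) + 1)

/-- `χ_L(w) = w + (w - w̄)(e^{C(w̄)} - 1)/(e^{C(w)} - e^{C(w̄)})`. -/
def chiL (μ : Measure ℝ) (w : ℂ) : ℂ :=
  w + (w - (starRingEnd ℂ) w) * (Complex.exp (cauchy μ ((starRingEnd ℂ) w)) - 1) /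
    (Complex.exp (cauchy μ w) - Complex.exp (cauchy μ ((starRingEnd ℂ) w)))

/-- `η_L(w) = 1 + (w - w̄)(e^{C(w)} - 1)(e^{C(w̄)} - 1)/(e^{C(w)} - e^{C(w̄)})`. -/
def etaL (μ : Measure ℝ) (w : ℂ) : ℂ :=
  1 + (w - (starRingEnd ℂ) w) * (Complex.exp (cauchy μ w) - 1) *
      (Complex.exp (cauchy μ ((starRingEnd ℂ) w)) - 1) /
    (Complex.exp (cauchy μ w) - Complex.exp (cauchy μ ((starRingEnd ℂ) w)))

/-- `π` times the Poisson kernel of the upper half-plane. -/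
def halfPlaneKernel (w : ℂ) (x : ℝ) : ℝ := w.im / (w.im ^ 2 + (x - w.re) ^ 2)

lemma sub_ofReal_ne_zero {w : ℂ} (hw : w.im ≠ 0) (x : ℝ) : w - (x : ℂ) ≠ 0 := fun h ↦
  hw (by simpa using congrArg Complex.im h)

lemma im_inv_sub_ofReal (w : ℂ) (x : ℝ) : ((w - (x : ℂ))⁻¹).im = -halfPlaneKernel w x := by
  rw [Complex.inv_im, Complex.normSq_apply, halfPlaneKernel]
  simp only [Complex.sub_re, Complex.sub_im, Complex.ofReal_re, Complex.ofReal_im, sub_zero]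
  ring

lemma integrable_inv_sub_ofReal (μ : Measure ℝ) [IsFiniteMeasure μ] {w : ℂ} (hw : w.im ≠ 0) :
    Integrable (fun x : ℝ ↦ (w - (x : ℂ))⁻¹) μ := by
  have hcont : Continuous fun x : ℝ ↦ (w - (x : ℂ))⁻¹ :=
    (continuous_const.sub continuous_ofReal).inv₀ (sub_ofReal_ne_zero hw)
  refine Integrable.of_bound hcont.aestronglyMeasurable |w.im|⁻¹ (Eventually.of_forall fun x ↦ ?_)
  rw [norm_inv]
  refine inv_anti₀ (abs_pos.mpr hw) ?_
  simpa using Complex.abs_im_le_norm (w - (x : ℂ))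

lemma cauchy_conj (μ : Measure ℝ) (w : ℂ) :
    cauchy μ ((starRingEnd ℂ) w) = (starRingEnd ℂ) (cauchy μ w) := by
  simp_rw [cauchy, ← integral_conj, map_inv₀, map_sub, Complex.conj_ofReal]

lemma cauchy_im (μ : Measure ℝ) [IsFiniteMeasure μ] {w : ℂ} (hw : w.im ≠ 0) :
    (cauchy μ w).im = -∫ x, halfPlaneKernel w x ∂μ := by
  have h := integral_im (integrable_inv_sub_ofReal μ hw)
  simp only [RCLike.im_to_complex, im_inv_sub_ofReal] at h
  rw [cauchy, ← h, integral_neg]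

lemma halfPlaneKernel_pos {w : ℂ} (hw : 0 < w.im) (x : ℝ) : 0 < halfPlaneKernel w x := by
  unfold halfPlaneKernel; positivity

lemma integral_halfPlaneKernel (w : ℂ) (a b : ℝ) :
    ∫ x in a..b, halfPlaneKernel w x =
      Real.arctan ((b - w.re) / w.im) - Real.arctan ((a - w.re) / w.im) := by
  simp only [halfPlaneKernel]
  rw [intervalIntegral.integral_comp_sub_right (fun x ↦ w.im / (w.im ^ 2 + x ^ 2)),
    integral_div_sq_add_sq]

lemma cauchy_im_neg (μ : Measure ℝ) [IsProbabilityMeasure μ] {w : ℂ} (hw : 0 < w.im) :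
    (cauchy μ w).im < 0 := by
  have hint : Integrable (halfPlaneKernel w) μ := by
    have h := (integrable_inv_sub_ofReal μ hw.ne').im.neg
    simpa only [RCLike.im_to_complex, im_inv_sub_ofReal, Pi.neg_def, neg_neg] using h
  have hpos : 0 < ∫ x, halfPlaneKernel w x ∂μ := by
    have hsupp : Function.support (halfPlaneKernel w) = Set.univ :=
      Set.eq_univ_of_forall fun x ↦ (halfPlaneKernel_pos hw x).ne'
    rw [integral_pos_iff_support_of_nonneg (fun x ↦ (halfPlaneKernel_pos hw x).le) hint, hsupp,
      measure_univ]
    exact zero_lt_one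
  rw [cauchy_im μ hw.ne']
  linarith

lemma measure_compl_eq_zero_of_msupport_subset {μ : Measure ℝ} {s : Set ℝ}
    (hs : msupport μ ⊆ s) : μ sᶜ = 0 := by
  refine measure_null_of_locally_null _ fun x hx ↦ ?_
  have hx' : x ∉ msupport μ := fun h ↦ hx (hs h)
  simp only [msupport, Set.mem_ofPred_eq, not_forall, not_not] at hx'
  obtain ⟨U, hU, hU0⟩ := hx'
  exact ⟨U, nhdsWithin_le_nhds hU, hU0⟩

lemma le_restrict_of_msupport_subset {μ ν : Measure ℝ} {s : Set ℝ} (hle : μ ≤ ν)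
    (hs : msupport μ ⊆ s) : μ ≤ ν.restrict s := by
  have hμ : μ.restrict s = μ := Measure.restrict_eq_self_of_ae_mem
    (measure_compl_eq_zero_of_msupport_subset hs)
  exact hμ ▸ Measure.restrict_mono subset_rfl hle

lemma neg_pi_lt_cauchy_im (μ : Measure ℝ) [IsFiniteMeasure μ] {a b : ℝ} (hab : a ≤ b)
    (hle : μ ≤ volume) (hsupp : msupport μ ⊆ Set.Icc a b) {w : ℂ} (hw : 0 < w.im) :
    -Real.pi < (cauchy μ w).im := by
  have hcont : Continuous (halfPlaneKernel w) :=
    continuous_const.div (by fun_prop) fun x ↦ by positivity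
  have hmono : ∫ x, halfPlaneKernel w x ∂μ ≤ ∫ x in Set.Icc a b, halfPlaneKernel w x :=
    integral_mono_measure (le_restrict_of_msupport_subset hle hsupp)
      (Eventually.of_forall fun x ↦ (halfPlaneKernel_pos hw x).le) hcont.integrableOn_Icc
  rw [integral_Icc_eq_integral_Ioc, ← intervalIntegral.integral_of_le hab,
    integral_halfPlaneKernel] at hmono
  have h₁ := Real.arctan_lt_pi_div_two ((b - w.re) / w.im)
  have h₂ := Real.neg_pi_div_two_lt_arctan ((a - w.re) / w.im)
  rw [cauchy_im μ hw.ne']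
  linarith

lemma exp_cauchy_conj (μ : Measure ℝ) (w : ℂ) :
    exp (cauchy μ ((starRingEnd ℂ) w)) = (starRingEnd ℂ) (exp (cauchy μ w)) := by
  rw [cauchy_conj, exp_conj]

lemma sub_conj_ne_zero {z : ℂ} (hz : z.im ≠ 0) : z - (starRingEnd ℂ) z ≠ 0 := by
  rw [sub_conj]
  simpa using hz

section Algebra

variable (μ : Measure ℝ) {w : ℂ}

lemma conj_chiL (h : (exp (cauchy μ w)).im ≠ 0) : (starRingEnd ℂ) (chiL μ w) = chiL μ w := by
  have h₁ := sub_conj_ne_zero h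
  have h₂ := neg_sub (exp (cauchy μ w)) _ ▸ neg_ne_zero.mpr h₁
  rw [chiL, exp_cauchy_conj]
  simp only [map_add, map_div₀, map_mul, map_sub, map_one, conj_conj]
  field_simp
  ring

lemma conj_etaL (h : (exp (cauchy μ w)).im ≠ 0) : (starRingEnd ℂ) (etaL μ w) = etaL μ w := by
  have h₁ := sub_conj_ne_zero h
  have h₂ := neg_sub (exp (cauchy μ w)) _ ▸ neg_ne_zero.mpr h₁
  rw [etaL, exp_cauchy_conj]
  simp only [map_add, map_div₀, map_mul, map_sub, map_one, conj_conj]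
  field_simp
  ring

lemma sub_chiL_sub_etaL_add_one (h : (exp (cauchy μ w)).im ≠ 0) :
    w - chiL μ w - etaL μ w + 1 = (w - chiL μ w) * exp (cauchy μ w) := by
  have := sub_conj_ne_zero h
  rw [chiL, etaL, exp_cauchy_conj]
  field_simp
  ring

end Algebra

lemma log_mul_exp {A c : ℂ} (hA : A ≠ 0) (hA_im : 0 ≤ A.im) (hc₁ : -Real.pi < c.im)
    (hc₂ : c.im ≤ 0) : log (A * exp c) = log A + c := by
  have hlog : log (exp c) = c := log_exp hc₁ (hc₂.trans Real.pi_pos.le)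
  have harg : arg (exp c) = c.im := by rw [← log_im, hlog]
  rw [log_mul hA (exp_ne_zero c) ⟨?_, ?_⟩, hlog] <;> rw [harg]
  · linarith [arg_nonneg_iff.mpr hA_im]
  · linarith [arg_le_pi A]

theorem chiL_etaL_real_and_root_general (μ : Measure ℝ) (a b : ℝ) [IsProbabilityMeasure μ]
    (hle : μ ≤ volume) (hsupp : msupport μ ⊆ Set.Icc a b) (hab : 1 < b - a) :
    ∀ w : ℂ, 0 < w.im →
      Complex.exp (cauchy μ w) ≠ Complex.exp (cauchy μ ((starRingEnd ℂ) w)) ∧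
      (chiL μ w).im = 0 ∧ (etaL μ w).im = 0 ∧
      fprime μ (chiL μ w).re (etaL μ w).re w = 0 := by
  intro w hw
  have hC₁ := neg_pi_lt_cauchy_im μ (by linarith) hle hsupp hw
  have hC₂ := cauchy_im_neg μ hw
  have hE : (exp (cauchy μ w)).im ≠ 0 := by
    rw [exp_im]
    exact (mul_neg_of_pos_of_neg (Real.exp_pos _) (Real.sin_neg_of_neg_of_neg_pi_lt hC₂ hC₁)).ne
  have hχ := conj_chiL μ hE
  have hη := conj_etaL μ hE
  have hA : 0 < (w - chiL μ w).im := by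
    rwa [sub_im, conj_eq_iff_im.mp hχ, sub_zero]
  refine ⟨?_, conj_eq_iff_im.mp hχ, conj_eq_iff_im.mp hη, ?_⟩
  · rw [exp_cauchy_conj]
    exact fun h ↦ hE (conj_eq_iff_im.mp h.symm)
  · rw [fprime, conj_eq_iff_re.mp hχ, conj_eq_iff_re.mp hη, sub_chiL_sub_etaL_add_one μ hE,
      log_mul_exp (fun h ↦ by simp [h] at hA) hA.le hC₁ hC₂.le]
    ring

/-- For every `w ∈ ℍ`: `e^{C(w)} ≠ e^{C(w̄)}` (so `χ_L(w)` and `η_L(w)` are well defined),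
`χ_L(w)` and `η_L(w)` are real, and `f′_{(χ_L(w), η_L(w))}(w) = 0`. -/
theorem chiL_etaL_real_and_root (μ : Measure ℝ) (a b : ℝ) [IsProbabilityMeasure μ]
    (hle : μ ≤ volume) (hsupp : msupport μ ⊆ Set.Icc a b)
    (ha : a ∈ msupport μ) (hb : b ∈ msupport μ) (hab : 1 < b - a) :
    ∀ w : ℂ, 0 < w.im →
      Complex.exp (cauchy μ w) ≠ Complex.exp (cauchy μ ((starRingEnd ℂ) w)) ∧
      (chiL μ w).im = 0 ∧ (etaL μ w).im = 0 ∧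
      fprime μ (chiL μ w).re (etaL μ w).re w = 0 :=
  chiL_etaL_real_and_root_general μ a b hle hsupp hab
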